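/- Let D' be a finite set, α : D' → ℝ≥0, and let γ, z₁, OPT, ε, θ be nonnegative reals and k', m ∈ ℕ satisfy (m + |D'|)·θ ≤ ε·OPT and Σ_{j∈D'} α_j − k'·z₁ − m·γ ≤ OPT. Let I be a finite index set and for each i ∈ I let r'_i ≥ 0 and B_i ⊆ D' be given, with the sets B_i nonempty and pairwise disjoint, and with Σ_{j∈B_i} α_j ≥ r'_i + z₁ − θ for every i ∈ I. Let Out ⊆ D' have |Out| = m, be disjoint from every B_i, and satisfy α_j ≥ γ − θ for all j ∈ Out. Then Σ_{i∈I} r'_i + |I|·z₁ ≤ (1 + ε)·OPT + k'·z₁. In particular, if |I| ≥ k' then Σ_{i∈I} r'_i ≤ (1 + ε)·OPT, and if |I| > k' then z₁ ≤ (1 + ε)·OPT. -/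

import Mathlib

/-!
Every client of `D'` pays its dual value at most once: the balls `B i` and `Out` are disjoint
pieces of `D'`, so the almost-tight payments `r'_i + z₁ - θ` of the balls plus the payments
`γ - θ` of the outliers are bounded by `Σ_{D'} α ≤ OPT + k'·z₁ + m·γ`. The accumulated slack
is `(|I| + m)·θ`, and since the balls are nonempty and disjoint, `|I| ≤ |D'|`, so this slack is
at most `ε·OPT`.
-/

open Finset

theorem Finset.sum_sum_add_sum_le_of_pairwiseDisjoint {δ ι M : Type*} [DecidableEq δ]
    [AddCommMonoid M] [PartialOrder M] [IsOrderedAddMonoid M]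
    {D Out : Finset δ} {I : Finset ι} {B : ι → Finset δ} {f : δ → M}
    (hf : ∀ j ∈ D, 0 ≤ f j) (hB : (I : Set ι).PairwiseDisjoint B) (hBD : ∀ i ∈ I, B i ⊆ D)
    (hOutD : Out ⊆ D) (hOut : ∀ i ∈ I, Disjoint Out (B i)) :
    ∑ i ∈ I, ∑ j ∈ B i, f j + ∑ j ∈ Out, f j ≤ ∑ j ∈ D, f j := by
  have hUD : I.biUnion B ⊆ D := biUnion_subset.2 hBD
  calc ∑ i ∈ I, ∑ j ∈ B i, f j + ∑ j ∈ Out, f j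
      = ∑ j ∈ I.biUnion B ∪ Out, f j := by
        rw [sum_union ((disjoint_biUnion_left _ _ _).2 fun i hi ↦ (hOut i hi).symm), sum_biUnion hB]
    _ ≤ ∑ j ∈ D, f j :=
        sum_le_sum_of_subset_of_nonneg (union_subset hUD hOutD) fun j hj _ ↦ hf j hj

theorem Finset.card_le_card_of_pairwiseDisjoint_nonempty {δ ι : Type*} {D : Finset δ} {I : Finset ι}
    {B : ι → Finset δ} (hB : (I : Set ι).PairwiseDisjoint B) (hBne : ∀ i ∈ I, (B i).Nonempty)
    (hBD : ∀ i ∈ I, B i ⊆ D) : #I ≤ #D := by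
  classical
  exact (card_le_card_biUnion hB hBne).trans (card_le_card (biUnion_subset.2 hBD))

theorem sum_add_card_mul_le_of_almost_tight {δ ι : Type*} [DecidableEq δ]
    {D' Out : Finset δ} {I : Finset ι} {B : ι → Finset δ} {r' : ι → ℝ} {a : δ → ℝ}
    {γ z₁ θ : ℝ} (ha : ∀ j ∈ D', 0 ≤ a j) (hB : (I : Set ι).PairwiseDisjoint B)
    (hBD : ∀ i ∈ I, B i ⊆ D') (hOutD : Out ⊆ D') (hOut : ∀ i ∈ I, Disjoint Out (B i))
    (htight : ∀ i ∈ I, r' i + z₁ - θ ≤ ∑ j ∈ B i, a j) (hOuta : ∀ j ∈ Out, γ - θ ≤ a j) :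
    ∑ i ∈ I, r' i + #I * z₁ + #Out * γ ≤ ∑ j ∈ D', a j + (#I + #Out) * θ := by
  have hballs : ∑ i ∈ I, (r' i + z₁ - θ) ≤ ∑ i ∈ I, ∑ j ∈ B i, a j := sum_le_sum htight
  have hout : #Out • (γ - θ) ≤ ∑ j ∈ Out, a j := card_nsmul_le_sum Out a _ hOuta
  have hD := sum_sum_add_sum_le_of_pairwiseDisjoint ha hB hBD hOutD hOut
  simp only [sum_sub_distrib, sum_add_distrib, sum_const, nsmul_eq_mul] at hballs hout
  linarith

theorem le_of_add_card_mul_le {S A z : ℝ} {n k : ℕ} (hS : 0 ≤ S) (hz : 0 ≤ z)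
    (h : S + n * z ≤ A + k * z) :
    (k ≤ n → S ≤ A) ∧ (k < n → z ≤ A) := by
  refine ⟨fun hkn ↦ ?_, fun hkn ↦ ?_⟩
  · have : (k : ℝ) * z ≤ n * z := by gcongr
    linarith
  · have : ((k : ℝ) + 1) * z ≤ n * z := by gcongr; exact_mod_cast hkn
    linarith

theorem stmt_16 {δ ι : Type*} [DecidableEq δ]
    (D' : Finset δ) (α : δ → ℝ) (hα : ∀ j ∈ D', 0 ≤ α j)
    (γ z₁ OPT ε θ : ℝ) (k' m : ℕ)
    (hz₁ : 0 ≤ z₁) (hθ : 0 ≤ θ)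
    (hθOPT : ((m : ℝ) + (D'.card : ℝ)) * θ ≤ ε * OPT)
    (hdual : (∑ j ∈ D', α j) - (k' : ℝ) * z₁ - (m : ℝ) * γ ≤ OPT)
    (I : Finset ι) (r' : ι → ℝ) (B : ι → Finset δ)
    (hr' : ∀ i ∈ I, 0 ≤ r' i)
    (hBD : ∀ i ∈ I, B i ⊆ D')
    (hBne : ∀ i ∈ I, (B i).Nonempty)
    (hBdisj : ∀ i ∈ I, ∀ i' ∈ I, i ≠ i' → Disjoint (B i) (B i'))
    (htight : ∀ i ∈ I, r' i + z₁ - θ ≤ ∑ j ∈ B i, α j)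
    (Out : Finset δ) (hOutD : Out ⊆ D') (hOutcard : Out.card = m)
    (hOutdisj : ∀ i ∈ I, Disjoint Out (B i))
    (hOutα : ∀ j ∈ Out, γ - θ ≤ α j) :
    ((∑ i ∈ I, r' i) + (I.card : ℝ) * z₁ ≤ (1 + ε) * OPT + (k' : ℝ) * z₁) ∧
    (k' ≤ I.card → ∑ i ∈ I, r' i ≤ (1 + ε) * OPT) ∧
    (k' < I.card → z₁ ≤ (1 + ε) * OPT) := by
  have hB : (I : Set ι).PairwiseDisjoint B := fun i hi i' hi' ↦ hBdisj i hi i' hi'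
  have hpay := sum_add_card_mul_le_of_almost_tight hα hB hBD hOutD hOutdisj htight hOutα
  have hI : (#I : ℝ) ≤ #D' := mod_cast card_le_card_of_pairwiseDisjoint_nonempty hB hBne hBD
  have hslack : ((#I : ℝ) + m) * θ ≤ ε * OPT :=
    le_trans (mul_le_mul_of_nonneg_right (by linarith) hθ) hθOPT
  rw [hOutcard] at hpay
  have key : ∑ i ∈ I, r' i + #I * z₁ ≤ (1 + ε) * OPT + k' * z₁ := by linarith
  exact ⟨key, le_of_add_card_mul_le (sum_nonneg hr') hz₁ key⟩
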